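/- Assume that A is an algebra whose commutator operation is not commutative, i.e., there exist congruences γ, δ ∈ Con(A) with [γ,δ] ≠ [δ,γ]. Then some quotient algebra B of A has congruences α, β ∈ Con(B) such that [β,α] = 0 < [α,β]. -/

import Mathlib

/-- A (universal-algebraic) signature: a type of operation symbols with arities. -/
structure Sig where
  ops : Type
  arity : ops → ℕ

/-- An algebra for a signature: a carrier set with an interpretation of each
operation symbol. -/
structure Alg (σ : Sig) where
  carrier : Type
  interp : ∀ f : σ.ops, (Fin (σ.arity f) → carrier) → carrier

/-- Terms over a signature with variables from `V`. -/
inductive Trm (σ : Sig) (V : Type) : Type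
  | var : V → Trm σ V
  | op : (f : σ.ops) → (Fin (σ.arity f) → Trm σ V) → Trm σ V

/-- Evaluation of a term in an algebra under an assignment of the variables. -/
def Alg.evalTrm {σ : Sig} (A : Alg σ) {V : Type} (asg : V → A.carrier) :
    Trm σ V → A.carrier
  | .var v => asg v
  | .op f ts => A.interp f fun i => A.evalTrm asg (ts i)

/-- A congruence on an algebra: an equivalence relation compatible with the
basic operations. -/
structure Congruence {σ : Sig} (A : Alg σ) where
  rel : A.carrier → A.carrier → Prop
  iseqv : Equivalence rel
  compat : ∀ (f : σ.ops) (a b : Fin (σ.arity f) → A.carrier),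
    (∀ i, rel (a i) (b i)) → rel (A.interp f a) (A.interp f b)

namespace Congruence

variable {σ : Sig} {A : Alg σ}

theorem ext' {c d : Congruence A} (h : c.rel = d.rel) : c = d := by
  cases c; cases d; cases h; rfl

instance : PartialOrder (Congruence A) where
  le c d := ∀ a b, c.rel a b → d.rel a b
  le_refl c a b h := h
  le_trans c d e h1 h2 a b h := h2 a b (h1 a b h)
  le_antisymm c d h1 h2 :=
    ext' (funext fun a => funext fun b => propext ⟨h1 a b, h2 a b⟩)

instance : InfSet (Congruence A) where
  sInf S :=
    { rel := fun a b => ∀ c ∈ S, c.rel a b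
      iseqv := ⟨fun a c _ => c.iseqv.refl a,
                fun h c hc => c.iseqv.symm (h c hc),
                fun h1 h2 c hc => c.iseqv.trans (h1 c hc) (h2 c hc)⟩
      compat := fun f a b h c hc => c.compat f a b fun i => h i c hc }

/-- The congruences of an algebra form a complete lattice (`⊥` is the equality
congruence, `⊤` is the total congruence, meet is intersection). -/
instance : CompleteLattice (Congruence A) :=
  completeLatticeOfInf _ fun S =>
    ⟨fun c hc a b h => h c hc, fun c hc a b h d hd => hc hd a b h⟩

end Congruence

/-- `Centralizes S T δ` is the centralizer relation `C(S,T;δ)`: for every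
`S,T`-matrix `[[p,q],[r,s]]` (built from a term operation `t`, tuples `a S b`
and `u T v`), if `(p,q) ∈ δ` then `(r,s) ∈ δ`. -/
def Centralizes {σ : Sig} {A : Alg σ} (S T δ : Congruence A) : Prop :=
  ∀ (m n : ℕ) (t : Trm σ (Sum (Fin m) (Fin n)))
    (a b : Fin m → A.carrier) (u v : Fin n → A.carrier),
    (∀ i, S.rel (a i) (b i)) → (∀ j, T.rel (u j) (v j)) →
    δ.rel (A.evalTrm (Sum.elim a u) t) (A.evalTrm (Sum.elim a v) t) →
    δ.rel (A.evalTrm (Sum.elim b u) t) (A.evalTrm (Sum.elim b v) t)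

/-- The commC `[S,T]`: the least congruence `δ` with `C(S,T;δ)`. -/
def commC {σ : Sig} {A : Alg σ} (S T : Congruence A) : Congruence A :=
  sInf {δ | Centralizes S T δ}

/-- The relative commC `[S,T]_ε`: the intersection of all congruences
`γ ≥ ε` with `C(S,T;γ)`. -/
def relCommC {σ : Sig} {A : Alg σ} (S T ε : Congruence A) : Congruence A :=
  sInf {γ | ε ≤ γ ∧ Centralizes S T γ}

/-- The congruence generated by a single pair `(x, y)`. -/
def cgPair {σ : Sig} (A : Alg σ) (x y : A.carrier) : Congruence A :=
  sInf {c | c.rel x y}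

/-- Homomorphisms of algebras. -/
structure UAHom {σ : Sig} (A B : Alg σ) where
  toFun : A.carrier → B.carrier
  map_op : ∀ (f : σ.ops) (a : Fin (σ.arity f) → A.carrier),
    toFun (A.interp f a) = B.interp f (fun i => toFun (a i))

/-- The product of a family of algebras. -/
def prodAlg {σ : Sig} {I : Type} (F : I → Alg σ) : Alg σ where
  carrier := ∀ i, (F i).carrier
  interp f a := fun i => (F i).interp f (fun j => a j i)

/-- A variety: a class of algebras of a fixed signature closed under
homomorphic images, subalgebras (here: isomorphic copies of subalgebras,
i.e. sources of injective homomorphisms), and arbitrary products. -/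
structure Variety (σ : Sig) where
  Mem : Alg σ → Prop
  closed_hom : ∀ {A B : Alg σ}, Mem A →
    (∃ h : UAHom A B, Function.Surjective h.toFun) → Mem B
  closed_sub : ∀ {A B : Alg σ}, Mem A →
    (∃ h : UAHom B A, Function.Injective h.toFun) → Mem B
  closed_prod : ∀ {I : Type} (F : I → Alg σ), (∀ i, Mem (F i)) → Mem (prodAlg F)

/-- The setoid associated with a congruence. -/
def Congruence.setoid {σ : Sig} {A : Alg σ} (c : Congruence A) :
    Setoid A.carrier := ⟨c.rel, c.iseqv⟩

/-- The quotient algebra of an algebra by a congruence. -/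
noncomputable def quotAlg {σ : Sig} (A : Alg σ) (c : Congruence A) : Alg σ where
  carrier := Quotient c.setoid
  interp f a := Quotient.mk c.setoid (A.interp f fun i => (a i).out)

/-- `algOn A α` is the algebra `A(α)`: the subalgebra of `A × A` whose
universe is `α`. -/
def algOn {σ : Sig} (A : Alg σ) (α : Congruence A) : Alg σ where
  carrier := {p : A.carrier × A.carrier // α.rel p.1 p.2}
  interp f a := ⟨(A.interp f fun i => (a i).1.1, A.interp f fun i => (a i).1.2),
    α.compat f _ _ fun i => (a i).2⟩

/-- The kernel of the first coordinate projection of `A(α)`. -/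
def eta1 {σ : Sig} (A : Alg σ) (α : Congruence A) : Congruence (algOn A α) where
  rel p q := p.1.1 = q.1.1
  iseqv := ⟨fun _ => rfl, Eq.symm, Eq.trans⟩
  compat f a b h := congrArg (A.interp f) (funext h)

/-- The kernel of the second coordinate projection of `A(α)`. -/
def eta2 {σ : Sig} (A : Alg σ) (α : Congruence A) : Congruence (algOn A α) where
  rel p q := p.1.2 = q.1.2
  iseqv := ⟨fun _ => rfl, Eq.symm, Eq.trans⟩
  compat f a b h := congrArg (A.interp f) (funext h)

/-- The congruence `Δ_{α,β}` on `A(α)` generated by the `β`-diagonal pairs. -/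
def diagDelta {σ : Sig} (A : Alg σ) (α β : Congruence A) :
    Congruence (algOn A α) :=
  sInf {c | ∀ x z : A.carrier, β.rel x z →
    c.rel ⟨(x, x), α.iseqv.refl x⟩ ⟨(z, z), α.iseqv.refl z⟩}

/-- A pentagon (five-element sublattice isomorphic to `N₅`) in the congruence
lattice with bottom `z`, side element `β`, critical chain `δ < θ`, and top `α`. -/
def IsPentagon {σ : Sig} {A : Alg σ} (z β δ θ α : Congruence A) : Prop :=
  δ < θ ∧ β ⊓ θ = z ∧ β ⊓ δ = z ∧ β ⊔ δ = α ∧ β ⊔ θ = α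

/-- Two congruences permute: `c ∘ d = d ∘ c`. -/
def Permutes {σ : Sig} {A : Alg σ} (c d : Congruence A) : Prop :=
  ∀ a b : A.carrier, (∃ x, c.rel a x ∧ d.rel x b) ↔ (∃ x, d.rel a x ∧ c.rel x b)

/-- `T` is a Taylor term for the variety `V`: an idempotent term satisfying an
`i`-th place Taylor identity for every place `i`. -/
def IsTaylorTrm {σ : Sig} (V : Variety σ) {n : ℕ} (T : Trm σ (Fin n)) : Prop :=
  0 < n ∧
  (∀ A : Alg σ, V.Mem A → ∀ c : A.carrier, A.evalTrm (fun _ => c) T = c) ∧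
  (∀ i : Fin n, ∃ w z : Fin n → Bool, w i ≠ z i ∧
    ∀ A : Alg σ, V.Mem A → ∀ x y : A.carrier,
      A.evalTrm (fun j => cond (w j) x y) T = A.evalTrm (fun j => cond (z j) x y) T)

/-- `V` has a Taylor term. -/
def HasTaylorTrm {σ : Sig} (V : Variety σ) : Prop :=
  ∃ (n : ℕ) (T : Trm σ (Fin n)), IsTaylorTrm V T

/-- A congruence is abelian if `[α,α] = 0`. -/
def IsAbelianCong {σ : Sig} {A : Alg σ} (α : Congruence A) : Prop :=
  commC α α = ⊥

/-- `d` is a weak difference term for `V`: `d(a,a,b) = b` and `d(a,b,b) = a`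
whenever the pair `(a,b)` lies in an abelian congruence of a member of `V`. -/
def IsWeakDifferenceTrm {σ : Sig} (V : Variety σ) (d : Trm σ (Fin 3)) : Prop :=
  ∀ A : Alg σ, V.Mem A → ∀ α : Congruence A, IsAbelianCong α →
    ∀ a b : A.carrier, α.rel a b →
      A.evalTrm ![a, a, b] d = b ∧ A.evalTrm ![a, b, b] d = a

/-- `d` is a difference term for `V`: `V ⊨ d(x,x,y) ≈ y` and `d(a,b,b) = a`
whenever the pair `(a,b)` lies in an abelian congruence of a member of `V`. -/
def IsDifferenceTrm {σ : Sig} (V : Variety σ) (d : Trm σ (Fin 3)) : Prop :=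
  (∀ A : Alg σ, V.Mem A → ∀ a b : A.carrier, A.evalTrm ![a, a, b] d = b) ∧
  (∀ A : Alg σ, V.Mem A → ∀ α : Congruence A, IsAbelianCong α →
    ∀ a b : A.carrier, α.rel a b → A.evalTrm ![a, b, b] d = a)

/-- The commC is left distributive throughout `V`. -/
def CommLeftDistrib {σ : Sig} (V : Variety σ) : Prop :=
  ∀ A : Alg σ, V.Mem A → ∀ x y z : Congruence A,
    commC (x ⊔ y) z = commC x z ⊔ commC y z

/-- The commC is right distributive throughout `V`. -/
def CommRightDistrib {σ : Sig} (V : Variety σ) : Prop :=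
  ∀ A : Alg σ, V.Mem A → ∀ x y z : Congruence A,
    commC x (y ⊔ z) = commC x y ⊔ commC x z

/-- The commC is commutative throughout `V`. -/
def CommutativeCommutator {σ : Sig} (V : Variety σ) : Prop :=
  ∀ A : Alg σ, V.Mem A → ∀ x y : Congruence A, commC x y = commC y x

/-- `V` is congruence modular. -/
def CongruenceModular {σ : Sig} (V : Variety σ) : Prop :=
  ∀ A : Alg σ, V.Mem A → IsModularLattice (Congruence A)

/-! Put `c = [δ,γ]` and pass to `A/c`, with `α = γ/c` and `β = δ/c`. Since `c ≤ γ ⊓ δ`,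
centrality conditions transfer between `A` and `A/c`: `C(β,α;0)` in `A/c` is `C(δ,γ;c)` in `A`,
which holds by the choice of `c`, so `[β,α] = 0`; and `[α,β] = 0` would mean `C(γ,δ;c)`, i.e.
`[γ,δ] ≤ [δ,γ]`. Choosing the orientation of `γ, δ` with `[γ,δ] ≰ [δ,γ]` gives the theorem. -/

variable {σ : Sig} {A : Alg σ}

def quotAlg.mk (c : Congruence A) : A.carrier → (quotAlg A c).carrier :=
  Quotient.mk c.setoid

theorem quotAlg.mk_surjective (c : Congruence A) : Function.Surjective (quotAlg.mk c) :=
  Quotient.mk_surjective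

theorem quotAlg.rel_out_mk (c : Congruence A) (x : A.carrier) :
    c.rel (quotAlg.mk c x).out x :=
  Quotient.mk_out (s := c.setoid) x

theorem evalTrm_quotAlg_mk (c : Congruence A) {V : Type} (asg : V → A.carrier) (t : Trm σ V) :
    (quotAlg A c).evalTrm (quotAlg.mk c ∘ asg) t = quotAlg.mk c (A.evalTrm asg t) := by
  induction t with
  | var v => rfl
  | op f ts ih =>
    refine Quotient.sound (c.compat f _ _ fun i => ?_)
    beta_reduce
    rw [ih i]
    exact quotAlg.rel_out_mk c _

namespace Congruence

theorem rel_evalTrm (c : Congruence A) {V : Type} {asg asg' : V → A.carrier}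
    (h : ∀ v, c.rel (asg v) (asg' v)) (t : Trm σ V) :
    c.rel (A.evalTrm asg t) (A.evalTrm asg' t) := by
  induction t with
  | var v => exact h v
  | op f ts ih => exact c.compat f _ _ fun i => ih i

def equality (A : Alg σ) : Congruence A where
  rel := Eq
  iseqv := ⟨fun _ => rfl, Eq.symm, Eq.trans⟩
  compat f _ _ h := congrArg (A.interp f) (funext h)

theorem bot_rel_iff {a b : A.carrier} : (⊥ : Congruence A).rel a b ↔ a = b :=
  ⟨fun h => (bot_le : ⊥ ≤ equality A) a b h, fun h => h ▸ (⊥ : Congruence A).iseqv.refl a⟩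

/-- The congruence `G/c` of `A/c` induced by a congruence `G ≥ c`. -/
def quotient (G c : Congruence A) (h : c ≤ G) : Congruence (quotAlg A c) where
  rel p q := G.rel p.out q.out
  iseqv := ⟨fun _ => G.iseqv.refl _, G.iseqv.symm, G.iseqv.trans⟩
  compat f a b hab := by
    have out_interp : ∀ x : Fin (σ.arity f) → (quotAlg A c).carrier,
        G.rel ((quotAlg A c).interp f x).out (A.interp f fun i => (x i).out) :=
      fun x => h _ _ (quotAlg.rel_out_mk c _)
    exact G.iseqv.trans (out_interp a)
      (G.iseqv.trans (G.compat f _ _ hab) (G.iseqv.symm (out_interp b)))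

theorem quotient_rel_mk {G c : Congruence A} (h : c ≤ G) (x y : A.carrier) :
    (G.quotient c h).rel (quotAlg.mk c x) (quotAlg.mk c y) ↔ G.rel x y := by
  have hx := h _ _ (quotAlg.rel_out_mk c x)
  have hy := h _ _ (quotAlg.rel_out_mk c y)
  exact ⟨fun hr => G.iseqv.trans (G.iseqv.symm hx) (G.iseqv.trans hr hy),
    fun hr => G.iseqv.trans hx (G.iseqv.trans hr (G.iseqv.symm hy))⟩

theorem quotient_self (c : Congruence A) : c.quotient c le_rfl = ⊥ :=
  le_antisymm (fun _ _ h => bot_rel_iff.2 (Quotient.out_equiv_out (s := c.setoid) |>.1 h)) bot_le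

end Congruence

open Congruence

theorem centralizes_left (S T : Congruence A) : Centralizes S T S := by
  intro m n t a b u v ha _ hpq
  have hleft : ∀ w, S.rel (Sum.elim b u w) (Sum.elim a u w) := by
    rintro (i | j)
    exacts [S.iseqv.symm (ha i), S.iseqv.refl _]
  have hright : ∀ w, S.rel (Sum.elim a v w) (Sum.elim b v w) := by
    rintro (i | j)
    exacts [ha i, S.iseqv.refl _]
  exact S.iseqv.trans (S.rel_evalTrm hleft t) (S.iseqv.trans hpq (S.rel_evalTrm hright t))

theorem centralizes_right (S T : Congruence A) : Centralizes S T T := by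
  intro m n t a b u v _ hu _
  refine T.rel_evalTrm ?_ t
  rintro (i | j)
  exacts [T.iseqv.refl _, hu j]

theorem centralizes_commC (S T : Congruence A) : Centralizes S T (commC S T) :=
  fun m n t a b u v ha hu hpq d hd => hd m n t a b u v ha hu (hpq d hd)

theorem commC_le {S T d : Congruence A} (h : Centralizes S T d) : commC S T ≤ d :=
  sInf_le h

theorem commC_le_left (S T : Congruence A) : commC S T ≤ S :=
  commC_le (centralizes_left S T)

theorem commC_le_right (S T : Congruence A) : commC S T ≤ T :=
  commC_le (centralizes_right S T)

theorem commC_eq_bot_iff {S T : Congruence A} : commC S T = ⊥ ↔ Centralizes S T ⊥ :=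
  ⟨fun h => h ▸ centralizes_commC S T, fun h => le_antisymm (commC_le h) bot_le⟩

theorem evalTrm_quotAlg_elim (c : Congruence A) {m n : ℕ} (a : Fin m → A.carrier)
    (u : Fin n → A.carrier) (t : Trm σ (Fin m ⊕ Fin n)) :
    (quotAlg A c).evalTrm (Sum.elim (quotAlg.mk c ∘ a) (quotAlg.mk c ∘ u)) t
      = quotAlg.mk c (A.evalTrm (Sum.elim a u) t) := by
  rw [← Sum.comp_elim, evalTrm_quotAlg_mk]

theorem centralizes_quotient_iff {c S T E : Congruence A} (hS : c ≤ S) (hT : c ≤ T)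
    (hE : c ≤ E) :
    Centralizes (S.quotient c hS) (T.quotient c hT) (E.quotient c hE) ↔ Centralizes S T E := by
  constructor
  · intro h m n t a b u v ha hu hpq
    have := h m n t (quotAlg.mk c ∘ a) (quotAlg.mk c ∘ b) (quotAlg.mk c ∘ u) (quotAlg.mk c ∘ v)
    simp only [evalTrm_quotAlg_elim, Function.comp_apply, quotient_rel_mk] at this
    exact this ha hu hpq
  · intro h m n t a b u v
    obtain ⟨a, rfl⟩ := (quotAlg.mk_surjective c).comp_left a
    obtain ⟨b, rfl⟩ := (quotAlg.mk_surjective c).comp_left b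
    obtain ⟨u, rfl⟩ := (quotAlg.mk_surjective c).comp_left u
    obtain ⟨v, rfl⟩ := (quotAlg.mk_surjective c).comp_left v
    simp only [evalTrm_quotAlg_elim, Function.comp_apply, quotient_rel_mk]
    exact h m n t a b u v

theorem exists_quotient_commC_asymm_of_not_le {γ δ : Congruence A}
    (h : ¬ commC γ δ ≤ commC δ γ) :
    ∃ (c : Congruence A) (α β : Congruence (quotAlg A c)),
      commC β α = ⊥ ∧ ⊥ < commC α β := by
  set c := commC δ γ
  refine ⟨c, γ.quotient c (commC_le_right δ γ), δ.quotient c (commC_le_left δ γ), ?_, ?_⟩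
  · rw [commC_eq_bot_iff, ← quotient_self c, centralizes_quotient_iff]
    exact centralizes_commC δ γ
  · rw [bot_lt_iff_ne_bot, Ne, commC_eq_bot_iff, ← quotient_self c, centralizes_quotient_iff]
    exact fun hc => h (commC_le hc)

/-- If the commutator operation of an algebra `A` is not commutative, then
some quotient algebra of `A` has congruences `α, β` with `[β,α] = 0 < [α,β]`. -/
theorem asymmetry_in_quotient {σ : Sig} (A : Alg σ)
    (γ δ : Congruence A) (h : commC γ δ ≠ commC δ γ) :
    ∃ (c : Congruence A) (α β : Congruence (quotAlg A c)),
      commC β α = ⊥ ∧ ⊥ < commC α β := by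
  by_cases hle : commC γ δ ≤ commC δ γ
  · exact exists_quotient_commC_asymm_of_not_le fun hge => h (le_antisymm hle hge)
  · exact exists_quotient_commC_asymm_of_not_le hle
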